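/- The incompatibility operator depends only on the symmetric part: for every C^∞ matrix field τ : ℝ³ → ℝ^{3×3}, inc τ = inc(sym τ) at every point; in particular, inc τ = 0 whenever τ takes skew-symmetric values. -/

import Mathlib

noncomputable section

open Matrix

/-- Vectors in ℝ³. -/
abbrev V3 := Fin 3 → ℝ
/-- 3×3 real matrices. -/
abbrev M3 := Matrix (Fin 3) (Fin 3) ℝ

/-- Partial derivative ∂ᵢ of a scalar field. -/
def pd (i : Fin 3) (f : V3 → ℝ) : V3 → ℝ :=
  fun x => fderiv ℝ f x (Pi.single i 1)

/-- Gradient matrix of a vector field: (grad v)_{ij} = ∂ⱼ vᵢ. -/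
def vgrad (v : V3 → V3) : V3 → M3 :=
  fun x => Matrix.of fun i j => pd j (fun y => v y i) x

/-- Divergence of a vector field. -/
def vdiv (v : V3 → V3) : V3 → ℝ :=
  fun x => ∑ i, pd i (fun y => v y i) x

/-- Cross product on ℝ³. -/
def cross (a b : V3) : V3 :=
  fun i => a (i + 1) * b (i + 2) - a (i + 2) * b (i + 1)

/-- Curl of a vector field. -/
def vcurl (v : V3 → V3) : V3 → V3 :=
  fun x i => pd (i + 1) (fun y => v y (i + 2)) x - pd (i + 2) (fun y => v y (i + 1)) x

/-- Row-wise curl of a matrix field. -/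
def mcurl (τ : V3 → M3) : V3 → M3 :=
  fun x => Matrix.of fun i j =>
    pd (j + 1) (fun y => τ y i (j + 2)) x - pd (j + 2) (fun y => τ y i (j + 1)) x

/-- Row-wise divergence of a matrix field. -/
def mdiv (τ : V3 → M3) : V3 → V3 :=
  fun x i => ∑ j, pd j (fun y => τ y i j) x

/-- Symmetric part of a matrix. -/
def msym (A : M3) : M3 := (1 / 2 : ℝ) • (A + Aᵀ)

/-- Deviatoric (trace-free) part of a matrix. -/
def devm (A : M3) : M3 := A - ((1 / 3 : ℝ) * A.trace) • (1 : M3)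

/-- The skew-symmetric matrix associated to a vector: mskw(ω) y = ω × y. -/
def mskw (w : V3) : M3 := !![0, -w 2, w 1; w 2, 0, -w 0; -w 1, w 0, 0]

/-- vskw(A) := mskw⁻¹(skw A). -/
def vskw (A : M3) : V3 :=
  (1 / 2 : ℝ) • ![A 2 1 - A 1 2, A 0 2 - A 2 0, A 1 0 - A 0 1]

/-- S⁻¹(A) := Aᵀ − (1/2)(tr A)I. -/
def Sinv (A : M3) : M3 := Aᵀ - ((1 / 2 : ℝ) * A.trace) • (1 : M3)

/-- S(A) := Aᵀ − (tr A)I. -/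
def Sop (A : M3) : M3 := Aᵀ - A.trace • (1 : M3)

/-- Incompatibility operator inc τ := curl (S⁻¹ (curl τ)). -/
def inc (τ : V3 → M3) : V3 → M3 := mcurl fun x => Sinv (mcurl τ x)

/-- Linearized Cotton–York operator cott τ := curl (S⁻¹ (inc τ)). -/
def cott (τ : V3 → M3) : V3 → M3 := mcurl fun x => Sinv (inc τ x)

/-- Hessian matrix of a scalar field. -/
def hess (u : V3 → ℝ) : V3 → M3 :=
  fun x => Matrix.of fun i j => pd i (pd j u) x

/-- Euclidean dot product on ℝ³. -/
def dotp (a b : V3) : ℝ := ∑ i, a i * b i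

/-- Smoothness of a vector field (componentwise C^∞). -/
def SmoothV (v : V3 → V3) : Prop := ∀ i, ContDiff ℝ (⊤ : ℕ∞) fun x => v x i

/-- Smoothness of a matrix field (entrywise C^∞). -/
def SmoothM (τ : V3 → M3) : Prop := ∀ i j, ContDiff ℝ (⊤ : ℕ∞) fun x => τ x i j

/-- Conformal Killing fields. -/
def CK (v : V3 → V3) : Prop :=
  ∃ (a c d : V3) (b : ℝ), ∀ x,
    v x = dotp x x • a - (2 * dotp a x) • x + b • x + cross c x + d

/-- Rigid motions. -/
def RM (v : V3 → V3) : Prop := ∃ a b : V3, ∀ x, v x = cross a x + b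

/-- Lowest-order Raviart–Thomas fields. -/
def RT (v : V3 → V3) : Prop := ∃ (a : V3) (b : ℝ), ∀ x, v x = a + b • x

/-- Polynomial scalar functions of total degree at most k. -/
def PolyLe (k : ℕ) (f : V3 → ℝ) : Prop :=
  ∃ p : MvPolynomial (Fin 3) ℝ, p.totalDegree ≤ k ∧ ∀ x, f x = MvPolynomial.eval x p

/-- Matrix fields with entries in P_k and values symmetric traceless. -/
def PolyLeST (k : ℕ) (τ : V3 → M3) : Prop :=
  (∀ i j, PolyLe k fun x => τ x i j) ∧ (∀ x, (τ x)ᵀ = τ x) ∧ ∀ x, (τ x).trace = 0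



/-! ### Auxiliary lemmas -/

lemma pd_zero' (i : Fin 3) (x : V3) : pd i (fun _ => (0:ℝ)) x = 0 := by simp [pd]

lemma pd_neg' (i : Fin 3) (f : V3 → ℝ) (x : V3) :
    pd i (fun y => -(f y)) x = -(pd i f x) := by simp [pd, fderiv_neg]

lemma pd_add' (i : Fin 3) {f g : V3 → ℝ} {x : V3} (hf : DifferentiableAt ℝ f x)
    (hg : DifferentiableAt ℝ g x) :
    pd i (fun y => f y + g y) x = pd i f x + pd i g x := by simp [pd, fderiv_fun_add hf hg]

lemma contDiff_pd' (i : Fin 3) {f : V3 → ℝ} (hf : ContDiff ℝ (⊤ : ℕ∞) f) : ContDiff ℝ (⊤ : ℕ∞) (pd i f) := by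
  have h : ContDiff ℝ (⊤ : ℕ∞) (fderiv ℝ f) := hf.fderiv_right (by simp)
  exact h.clm_apply contDiff_const

lemma pd_comm' {f : V3 → ℝ} (hf : ContDiff ℝ (⊤ : ℕ∞) f) (i j : Fin 3) (x : V3) :
    pd i (pd j f) x = pd j (pd i f) x := by
  have hd : ∀ y, HasFDerivAt f (fderiv ℝ f y) y :=
    fun y => (hf.differentiable (by simp) y).hasFDerivAt
  have hc : ContDiff ℝ (⊤ : ℕ∞) (fderiv ℝ f) := hf.fderiv_right (by simp)
  have h2 : HasFDerivAt (fderiv ℝ f) (fderiv ℝ (fderiv ℝ f) x) x :=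
    (hc.differentiable (by simp) x).hasFDerivAt
  have hsymm := second_derivative_symmetric hd h2
  have key : ∀ (v w : V3), fderiv ℝ (fun y => fderiv ℝ f y v) x w
      = fderiv ℝ (fderiv ℝ (fun y => f y) ) x w v := by
    intro v w
    rw [fderiv_clm_apply (hc.differentiable (by simp) x) (differentiableAt_const v)]
    simp
  show fderiv ℝ (fun y => fderiv ℝ f y (Pi.single j 1)) x (Pi.single i 1)
      = fderiv ℝ (fun y => fderiv ℝ f y (Pi.single i 1)) x (Pi.single j 1)
  rw [key, key, hsymm]

lemma smoothM_diffAt {τ : V3 → M3} (hτ : SmoothM τ) (i j : Fin 3) (x : V3) :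
    DifferentiableAt ℝ (fun y => τ y i j) x :=
  ((hτ i j).differentiable (by simp)).differentiableAt

lemma smooth_mcurl' {τ : V3 → M3} (hτ : SmoothM τ) : SmoothM (mcurl τ) := by
  intro i j
  have h : (fun x => mcurl τ x i j)
      = fun x => pd (j+1) (fun y => τ y i (j+2)) x - pd (j+2) (fun y => τ y i (j+1)) x := rfl
  rw [h]
  exact (contDiff_pd' _ (hτ _ _)).sub (contDiff_pd' _ (hτ _ _))

lemma smooth_Sinv' {τ : V3 → M3} (hτ : SmoothM τ) : SmoothM (fun y => Sinv (τ y)) := by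
  intro i j
  have h : (fun y => Sinv (τ y) i j)
      = fun y => τ y j i - ((1/2 : ℝ) * (∑ k, τ y k k)) * (1:M3) i j := by
    funext y
    simp [Sinv, Matrix.trace, Matrix.diag, Matrix.sub_apply, Matrix.transpose_apply,
      Matrix.smul_apply, smul_eq_mul]
  rw [h]
  exact (hτ j i).sub (((contDiff_const.mul (ContDiff.sum fun k _ => hτ k k))).mul contDiff_const)

lemma Sinv_add' (A B : M3) : Sinv (A + B) = Sinv A + Sinv B := by
  ext i j
  simp [Sinv, Matrix.trace_add, add_smul, Matrix.sub_apply, Matrix.add_apply,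
    Matrix.transpose_apply, Matrix.smul_apply, smul_eq_mul]
  ring

lemma mcurl_add' {σ α : V3 → M3} (hσ : SmoothM σ) (hα : SmoothM α) (x : V3) :
    mcurl (fun y => σ y + α y) x = mcurl σ x + mcurl α x := by
  ext i j
  show pd (j+1) (fun y => (σ y + α y) i (j+2)) x - pd (j+2) (fun y => (σ y + α y) i (j+1)) x
      = mcurl σ x i j + mcurl α x i j
  simp only [Matrix.add_apply]
  rw [pd_add' _ (smoothM_diffAt hσ _ _ x) (smoothM_diffAt hα _ _ x),
      pd_add' _ (smoothM_diffAt hσ _ _ x) (smoothM_diffAt hα _ _ x)]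
  show _ = (pd (j+1) (fun y => σ y i (j+2)) x - pd (j+2) (fun y => σ y i (j+1)) x)
      + (pd (j+1) (fun y => α y i (j+2)) x - pd (j+2) (fun y => α y i (j+1)) x)
  ring

lemma inc_add' {σ α : V3 → M3} (hσ : SmoothM σ) (hα : SmoothM α) (x : V3) :
    inc (fun y => σ y + α y) x = inc σ x + inc α x := by
  have h1 : (fun y => Sinv (mcurl (fun z => σ z + α z) y))
      = fun y => Sinv (mcurl σ y) + Sinv (mcurl α y) := by
    funext y; rw [mcurl_add' hσ hα, Sinv_add']
  show mcurl (fun y => Sinv (mcurl (fun z => σ z + α z) y)) x = _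
  rw [h1]
  exact mcurl_add' (smooth_Sinv' (smooth_mcurl' hσ)) (smooth_Sinv' (smooth_mcurl' hα)) x

lemma inc_skew_zero' {α : V3 → M3} (hα : SmoothM α) (hsk : ∀ x, (α x)ᵀ = -α x) :
    ∀ x, inc α x = 0 := by
  have hba : ∀ (y : V3) (a b : Fin 3), α y b a = -(α y a b) := by
    intro y a b
    have := congrFun (congrFun (hsk y) a) b
    simpa [Matrix.transpose_apply, Matrix.neg_apply] using this
  have hdiag : ∀ (y : V3) (a : Fin 3), α y a a = 0 := by
    intro y a; have := hba y a a; linarith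
  have e00 : (fun y => α y 0 0) = (fun _ => (0:ℝ)) := funext fun y => hdiag y 0
  have e11 : (fun y => α y 1 1) = (fun _ => (0:ℝ)) := funext fun y => hdiag y 1
  have e22 : (fun y => α y 2 2) = (fun _ => (0:ℝ)) := funext fun y => hdiag y 2
  have e12 : (fun y => α y 1 2) = (fun y => -(α y 2 1)) := funext fun y => hba y 2 1
  have e20 : (fun y => α y 2 0) = (fun y => -(α y 0 2)) := funext fun y => hba y 0 2
  have e01 : (fun y => α y 0 1) = (fun y => -(α y 1 0)) := funext fun y => hba y 1 0
  have hS : ∀ (i j : Fin 3), (fun y => Sinv (mcurl α y) i j)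
      = fun y => -(pd j (fun z => α z (i+2) (i+1)) y) := by
    intro i j; funext y
    fin_cases i <;> fin_cases j <;>
      simp [Sinv, mcurl, Matrix.trace, Matrix.diag, Matrix.sub_apply, Matrix.transpose_apply,
        Matrix.smul_apply, Matrix.of_apply, Matrix.one_apply, Fin.sum_univ_three, smul_eq_mul,
        e00, e11, e22, e12, e20, e01, pd_neg', pd_zero'] <;>
      ring
  intro x
  ext i j
  show pd (j+1) (fun y => Sinv (mcurl α y) i (j+2)) x
      - pd (j+2) (fun y => Sinv (mcurl α y) i (j+1)) x = (0 : M3) i j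
  rw [hS i (j+2), hS i (j+1)]
  simp only [pd_neg', Matrix.zero_apply]
  rw [pd_comm' (hα _ _) (j+1) (j+2)]
  ring

lemma smooth_msym' {τ : V3 → M3} (hτ : SmoothM τ) : SmoothM (fun y => msym (τ y)) := by
  intro i j
  have h : (fun y => msym (τ y) i j) = fun y => (1/2 : ℝ) * (τ y i j + τ y j i) := by
    funext y
    simp [msym, Matrix.smul_apply, Matrix.add_apply, Matrix.transpose_apply, smul_eq_mul]
  rw [h]
  exact contDiff_const.mul ((hτ i j).add (hτ j i))


/-- inc depends only on the symmetric part; inc vanishes on skew fields. -/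
theorem inc_sym_part (τ : V3 → M3) (hτ : SmoothM τ) :
    (∀ x, inc τ x = inc (fun y => msym (τ y)) x) ∧
    ((∀ x, (τ x)ᵀ = -τ x) → ∀ x, inc τ x = 0) := by
  have hsm := smooth_msym' hτ
  have hskwsm : SmoothM (fun y => τ y - msym (τ y)) := by
    intro i j
    have h : (fun y => (τ y - msym (τ y)) i j)
        = fun y => τ y i j - (1/2 : ℝ) * (τ y i j + τ y j i) := by
      funext y
      simp [msym, Matrix.sub_apply, Matrix.smul_apply, Matrix.add_apply,
        Matrix.transpose_apply, smul_eq_mul]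
      ring
    rw [h]
    exact (hτ i j).sub (contDiff_const.mul ((hτ i j).add (hτ j i)))
  have hskw : ∀ y, (τ y - msym (τ y))ᵀ = -(τ y - msym (τ y)) := by
    intro y; ext a b
    simp [msym, Matrix.sub_apply, Matrix.smul_apply, Matrix.add_apply,
      Matrix.transpose_apply, Matrix.neg_apply, smul_eq_mul]
    ring
  have hd' : τ = fun y => msym (τ y) + (τ y - msym (τ y)) := by
    funext y; abel
  have main : ∀ x, inc τ x = inc (fun y => msym (τ y)) x := by
    intro x
    calc inc τ x = inc (fun y => msym (τ y) + (τ y - msym (τ y))) x := by rw [← hd']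
      _ = inc (fun y => msym (τ y)) x + inc (fun y => τ y - msym (τ y)) x :=
          inc_add' hsm hskwsm x
      _ = inc (fun y => msym (τ y)) x := by
          rw [inc_skew_zero' hskwsm hskw x, add_zero]
  refine ⟨main, fun hsk x => ?_⟩
  have h0 : (fun y => msym (τ y)) = fun _ => (0:M3) := by
    funext y; ext a b
    have := congrFun (congrFun (hsk y) a) b
    simp only [Matrix.transpose_apply, Matrix.neg_apply] at this
    simp [msym, Matrix.add_apply, Matrix.smul_apply, Matrix.transpose_apply,
      Matrix.zero_apply, smul_eq_mul]
    linarith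
  rw [main x, h0]
  have h1 : (fun y => Sinv (mcurl (fun _ : V3 => (0:M3)) y)) = fun _ => (0:M3) := by
    funext y
    have hz : mcurl (fun _ : V3 => (0:M3)) y = 0 := by
      ext a b; simp [mcurl, pd]
    rw [hz]
    simp [Sinv]
  show mcurl (fun y => Sinv (mcurl (fun _ : V3 => (0:M3)) y)) x = 0
  rw [h1]
  ext a b
  simp [mcurl, pd]

end
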